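/- With N = (1+δ)p² workers and product-code recovery threshold k_pro = N − (√N − p + 1)² + 1, the quantity (1/λ)log(N/(N−k_pro)) is at most (2/λ)log((1+δ+√(1+δ))/δ). -/
import Mathlib


/-- With `N = (1+δ)p²` workers and product-code recovery threshold `k_pro` satisfying
`N − k_pro = (√N − p + 1)² − 1`, we have
`(1/λ) log(N/(N−k_pro)) ≤ (2/λ) log((1+δ+√(1+δ))/δ)`. -/
theorem product_code_time_upper_bound
    (δ lam : ℝ) (hδ : 0 < δ) (hlam : 0 < lam)
    (p : ℕ) (hp : 0 < p) (N kpro : ℝ)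
    (hN : N = (1 + δ) * (p : ℝ) ^ 2)
    (hk : N - kpro = (Real.sqrt N - (p : ℝ) + 1) ^ 2 - 1) :
    (1 / lam) * Real.log (N / (N - kpro))
      ≤ (2 / lam) * Real.log ((1 + δ + Real.sqrt (1 + δ)) / δ) := by
  set s := Real.sqrt (1 + δ) with hs
  have hs1 : 1 < s := by
    have h := Real.sqrt_lt_sqrt (by norm_num : (0:ℝ) ≤ 1) (by linarith : (1:ℝ) < 1 + δ)
    simpa [hs] using h
  have hs2 : s ^ 2 = 1 + δ := Real.sq_sqrt (by linarith)
  have hp1 : (1:ℝ) ≤ (p:ℝ) := by exact_mod_cast hp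
  have hsqrtN : Real.sqrt N = (p : ℝ) * s := by
    rw [hN, mul_comm, Real.sqrt_mul (by positivity), Real.sqrt_sq (by positivity)]
  have hNk : N - kpro = ((p:ℝ) * (s - 1) + 1) ^ 2 - 1 := by
    rw [hk, hsqrtN]; ring
  have hNkpos : 0 < N - kpro := by
    rw [hNk]
    nlinarith [mul_pos (by linarith : (0:ℝ) < (p:ℝ)) (by linarith : (0:ℝ) < s - 1)]
  have hNpos : 0 < N := by rw [hN]; positivity
  have hs1pos : 0 < s - 1 := by linarith
  have key : N / (N - kpro) ≤ (s / (s - 1)) ^ 2 := by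
    rw [div_pow, div_le_div_iff₀ hNkpos (by positivity)]
    rw [hNk, hN]
    nlinarith [mul_pos (by linarith : (0:ℝ) < (p:ℝ)) hs1pos, sq_nonneg s,
      mul_nonneg (mul_nonneg (sq_nonneg s) (by linarith : (0:ℝ) ≤ (p:ℝ))) hs1pos.le]
  have hratio : (1 + δ + s) / δ = s / (s - 1) := by
    rw [div_eq_div_iff hδ.ne' hs1pos.ne']
    nlinarith [hs2]
  have hlog : Real.log (N / (N - kpro)) ≤ 2 * Real.log ((1 + δ + s) / δ) := by
    rw [hratio]
    calc Real.log (N / (N - kpro)) ≤ Real.log ((s / (s - 1)) ^ 2) :=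
          Real.log_le_log (by positivity) key
      _ = 2 * Real.log (s / (s - 1)) := by
          rw [Real.log_pow]; norm_num
  have h1 : (2 / lam) * Real.log ((1 + δ + s) / δ)
      = (1 / lam) * (2 * Real.log ((1 + δ + s) / δ)) := by ring
  rw [h1]
  exact mul_le_mul_of_nonneg_left hlog (by positivity)
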